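/- For all positive integers a and t and all integers x, y, z, the lattice graph of the 4×4 matrix L with rows (2a,0,a,x),(0,2a,a,y),(0,0,a,z),(0,0,0,t) is not linearly symmetric; that is, every lift of the body-centered cubic lattice graph BCC(a) yields a non-edge-symmetric graph. -/

import Mathlib

open Matrix

/-- The subgroup (submodule) `Mℤⁿ` generated by the columns of `M`. -/
def colSpan {ι : Type*} [Fintype ι] [DecidableEq ι] (M : Matrix ι ι ℤ) :
    Submodule ℤ (ι → ℤ) :=
  LinearMap.range M.mulVecLin

/-- The vertex set `ℤⁿ/Mℤⁿ` of the lattice graph. -/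
abbrev LatticeVertex {ι : Type*} [Fintype ι] [DecidableEq ι] (M : Matrix ι ι ℤ) :=
  (ι → ℤ) ⧸ colSpan M

/-- The `i`-th standard basis vector of `ℤⁿ`. -/
def stdBasis {ι : Type*} [DecidableEq ι] (i : ι) : ι → ℤ := Pi.single i 1

/-- The lattice graph `𝒢(M)`. -/
def latticeGraph {ι : Type*} [Fintype ι] [DecidableEq ι] (M : Matrix ι ι ℤ) :
    SimpleGraph (LatticeVertex M) where
  Adj v w := v ≠ w ∧ ∃ i : ι,
      v - w = Submodule.Quotient.mk (stdBasis i) ∨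
      w - v = Submodule.Quotient.mk (stdBasis i)
  symm := by constructor; rintro v w ⟨hne, i, h⟩; exact ⟨hne.symm, i, h.symm⟩
  loopless := ⟨fun v h => h.1 rfl⟩

/-- The subgraph of `𝒢(M)` spanned by the directions in `S`. -/
def spannedSubgraph {ι : Type*} [Fintype ι] [DecidableEq ι] (M : Matrix ι ι ℤ) (S : Set ι) :
    SimpleGraph (AddSubgroup.closure
      ((fun i => (Submodule.Quotient.mk (stdBasis i) : LatticeVertex M)) '' S)) where
  Adj v w := v ≠ w ∧ ∃ i ∈ S,
      (v : LatticeVertex M) - (w : LatticeVertex M) = Submodule.Quotient.mk (stdBasis i) ∨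
      (w : LatticeVertex M) - (v : LatticeVertex M) = Submodule.Quotient.mk (stdBasis i)
  symm := by constructor; rintro v w ⟨hne, i, hiS, h⟩; exact ⟨hne.symm, i, hiS, h.symm⟩
  loopless := ⟨fun v h => h.1 rfl⟩

/-- The projection of `𝒢(M)` over `e_j`: the subgraph spanned by all other directions. -/
def projGraph {ι : Type*} [Fintype ι] [DecidableEq ι] (M : Matrix ι ι ℤ) (j : ι) :=
  spannedSubgraph M {i | i ≠ j}

/-- The torus graph `T(a₁,…,aₙ)`. -/
def torusGraph {n : ℕ} (a : Fin n → ℕ) : SimpleGraph (∀ i, ZMod (a i)) where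
  Adj x y := x ≠ y ∧ ∃ i, (∀ j, j ≠ i → x j = y j) ∧ (x i = y i + 1 ∨ y i = x i + 1)
  symm := by
    constructor
    rintro x y ⟨hne, i, hj, h⟩
    exact ⟨hne.symm, i, fun j hji => (hj j hji).symm, h.symm⟩
  loopless := ⟨fun x h => h.1 rfl⟩

/-- A signed permutation matrix: exactly one nonzero entry, equal to `±1`,
in each row and each column. -/
def IsSignedPerm {n : ℕ} (P : Matrix (Fin n) (Fin n) ℤ) : Prop :=
  (∀ i j, P i j = 0 ∨ P i j = 1 ∨ P i j = -1) ∧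
  (∀ i, ∃! j, P i j ≠ 0) ∧ (∀ j, ∃! i, P i j ≠ 0)

/-- `𝒢(M)` is linearly symmetric: for every `i` there is a signed permutation matrix
inducing an automorphism of `𝒢(M)` sending `e₁` to `±e_i`. -/
def IsLinearlySymmetric {n : ℕ} (M : Matrix (Fin n) (Fin n) ℤ) : Prop :=
  ∀ i : Fin n, ∃ P : Matrix (Fin n) (Fin n) ℤ, IsSignedPerm P ∧
    (∃ Q : Matrix (Fin n) (Fin n) ℤ, P * M = M * Q) ∧
    (P.mulVec (stdBasis (⟨0, i.pos⟩ : Fin n)) = stdBasis i ∨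
      P.mulVec (stdBasis (⟨0, i.pos⟩ : Fin n)) = -stdBasis i)

/-!
A signed permutation matrix `P` with `PM = MQ` induces an automorphism of the group `ℤ⁴/Mℤ⁴` that
permutes the classes `f j` of `a • e_j` up to sign. For the lift `M` of `BCC(a)` one has
`f 0 + f 1 + f 2 = 0`, `2 • f j = 0` for `j ≠ 3`, and `f 0, f 1, f 2` pairwise distinct (a parity
argument, using `t ≠ 0`); so two distinct classes agree up to sign only if one index is `3`.
An automorphism `B` with `e₀ ↦ ±e₃` sends `f 0 + f 1 + f 2 = 0` to `f 3 = ±f (σ 3)`; applying `B`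
once more forces `σ 3 = 0`. An automorphism with `e₀ ↦ ±e₁` then turns `f 3 = ±f 0` into
`f 3 = ±f 1`, and together these give `f 0 = ±f 1`, which is impossible.
-/

theorem IsSignedPerm.exists_perm {n : ℕ} {P : Matrix (Fin n) (Fin n) ℤ} (hP : IsSignedPerm P) :
    ∃ (σ : Equiv.Perm (Fin n)) (s : Fin n → ℤˣ),
      ∀ j, P *ᵥ stdBasis j = (s j : ℤ) • stdBasis (σ j) := by
  choose r hr hr_uniq using hP.2.2
  have hr_inj : Function.Injective r := fun j j' h => by
    obtain ⟨_, _, hrow⟩ := hP.2.1 (r j)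
    exact (hrow j (hr j)).trans (hrow j' (h ▸ hr j')).symm
  have hunit : ∀ j, IsUnit (P (r j) j) := fun j => by
    rcases hP.1 (r j) j with h | h | h
    · exact absurd h (hr j)
    · simp [h]
    · simp [h]
  refine ⟨Equiv.ofBijective r hr_inj.bijective_of_finite, fun j => (hunit j).unit, fun j => ?_⟩
  ext i
  by_cases hi : i = r j
  · subst hi; simp [_root_.stdBasis, mulVec_single]
  · have : P i j = 0 := by_contra fun h => hi (hr_uniq j i h)
    simp [_root_.stdBasis, mulVec_single, hi, this]

theorem eq_of_smul_stdBasis_eq {ι : Type*} [DecidableEq ι] {c d : ℤ} {i k : ι} (hc : c ≠ 0)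
    (h : c • stdBasis k = d • stdBasis i) : k = i := by
  by_contra hki
  simpa [_root_.stdBasis, hki, hc] using congrFun h k

theorem mulVec_mem_colSpan {ι : Type*} [Fintype ι] [DecidableEq ι] {M P Q : Matrix ι ι ℤ}
    (h : P * M = M * Q) {v : ι → ℤ} (hv : v ∈ colSpan M) : P *ᵥ v ∈ colSpan M := by
  obtain ⟨u, rfl⟩ := hv
  exact ⟨Q *ᵥ u, by simp [mulVec_mulVec, h]⟩

section UpToSign

variable {V ι : Type*} [AddCommGroup V]

def PermutesUpToSign (φ : V →+ V) (f : ι → V) (σ : Equiv.Perm ι) : Prop :=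
  ∀ j, φ (f j) ∈ MulAction.orbit ℤˣ (f (σ j))

theorem PermutesUpToSign.mem_orbit {φ : V →+ V} {f : ι → V} {σ : Equiv.Perm ι}
    (hφ : PermutesUpToSign φ f σ) {i j : ι} (h : f i ∈ MulAction.orbit ℤˣ (f j)) :
    f (σ i) ∈ MulAction.orbit ℤˣ (f (σ j)) := by
  obtain ⟨u, hu : u • f j = f i⟩ := h
  have hφu : φ (f i) = u • φ (f j) := by
    rw [← hu, Units.smul_def, Units.smul_def, map_zsmul]
  rw [← MulAction.orbit_eq_iff.2 (hφ j), ← MulAction.orbit_smul u, ← hφu]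
  exact MulAction.mem_orbit_symm.1 (hφ i)

end UpToSign

theorem IsLinearlySymmetric.exists_permutesUpToSign {n : ℕ} {M : Matrix (Fin n) (Fin n) ℤ}
    (hM : IsLinearlySymmetric M) (c : ℤ) (i : Fin n) :
    ∃ (φ : LatticeVertex M →+ LatticeVertex M) (σ : Equiv.Perm (Fin n)),
      PermutesUpToSign φ (fun j => c • (Submodule.Quotient.mk (stdBasis j) : LatticeVertex M)) σ ∧
        σ ⟨0, i.pos⟩ = i := by
  obtain ⟨P, hP, ⟨Q, hPQ⟩, hP₀⟩ := hM i
  obtain ⟨σ, s, hs⟩ := hP.exists_perm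
  let φ := (colSpan M).mapQ (colSpan M) P.mulVecLin fun _ hv => mulVec_mem_colSpan hPQ hv
  have hφ : ∀ v, φ (Submodule.Quotient.mk v) = Submodule.Quotient.mk (P *ᵥ v) := fun _ => rfl
  refine ⟨φ.toAddMonoidHom, σ, fun j => ⟨s j, ?_⟩, ?_⟩
  · change s j • c • (Submodule.Quotient.mk (stdBasis (σ j)) : LatticeVertex M) =
      φ (c • Submodule.Quotient.mk (stdBasis j))
    rw [map_zsmul, hφ, hs, Submodule.Quotient.mk_smul, smul_comm, Units.smul_def]
  · rcases hP₀ with h | h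
    · exact eq_of_smul_stdBasis_eq (s _).ne_zero ((hs _).symm.trans (h.trans (one_smul ℤ _).symm))
    · exact eq_of_smul_stdBasis_eq (s _).ne_zero
        ((hs _).symm.trans (h.trans (neg_one_smul ℤ _).symm))

section Fin4

variable {V : Type*} [AddCommGroup V] {f : Fin 4 → V}

theorem units_smul_eq_self_of_two_nsmul_eq_zero {v : V} (hv : 2 • v = 0) (u : ℤˣ) :
    u • v = v := by
  rcases Int.units_eq_one_or u with rfl | rfl
  · exact one_smul _ _
  · rw [Units.neg_smul, one_smul, neg_eq_iff_add_eq_zero, ← two_nsmul, hv]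

theorem PermutesUpToSign.mem_orbit_of_sum_eq_zero {φ : V →+ V} {σ : Equiv.Perm (Fin 4)}
    (hφ : PermutesUpToSign φ f σ) (htwo : ∀ j ≠ 3, 2 • f j = 0) (hsum : f 0 + f 1 + f 2 = 0)
    (hσ : σ 0 = 3) : f (σ 3) ∈ MulAction.orbit ℤˣ (f 3) := by
  have hσne : ∀ j ≠ 0, σ j ≠ 3 := fun j hj h => hj (σ.injective (h.trans hσ.symm))
  have hsumσ : f (σ 1) + f (σ 2) + f (σ 3) = 0 := by
    have h := Equiv.sum_comp σ f
    simp only [Fin.sum_univ_four, hσ] at h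
    linear_combination (norm := module) h + hsum
  obtain ⟨s₀, hs₀ : s₀ • f 3 = φ (f 0)⟩ := hσ ▸ hφ 0
  obtain ⟨s₁, hs₁ : s₁ • f (σ 1) = φ (f 1)⟩ := hφ 1
  obtain ⟨s₂, hs₂ : s₂ • f (σ 2) = φ (f 2)⟩ := hφ 2
  rw [units_smul_eq_self_of_two_nsmul_eq_zero (htwo _ (hσne 1 (by decide)))] at hs₁
  rw [units_smul_eq_self_of_two_nsmul_eq_zero (htwo _ (hσne 2 (by decide)))] at hs₂
  have hφsum := congrArg φ hsum
  rw [map_add, map_add, map_zero, ← hs₀, ← hs₁, ← hs₂] at hφsum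
  refine ⟨s₀, show s₀ • f 3 = f (σ 3) from ?_⟩
  generalize s₀ • f 3 = g at hφsum ⊢
  linear_combination (norm := module) hφsum - hsumσ

theorem eq_three_of_mem_orbit (htwo : ∀ j ≠ 3, 2 • f j = 0) (hinj : Set.InjOn f {3}ᶜ)
    {i j : Fin 4} (h : f i ∈ MulAction.orbit ℤˣ (f j)) (hij : i ≠ j) : i = 3 ∨ j = 3 := by
  by_contra! h3
  obtain ⟨u, hu : u • f j = f i⟩ := h
  rw [units_smul_eq_self_of_two_nsmul_eq_zero (htwo j h3.2)] at hu
  exact hij (hinj h3.1 h3.2 hu.symm)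

theorem false_of_permutesUpToSign (htwo : ∀ j ≠ 3, 2 • f j = 0) (hsum : f 0 + f 1 + f 2 = 0)
    (hinj : Set.InjOn f {3}ᶜ) {φA φB : V →+ V} {σA σB : Equiv.Perm (Fin 4)}
    (hA : PermutesUpToSign φA f σA) (hσA : σA 0 = 1)
    (hB : PermutesUpToSign φB f σB) (hσB : σB 0 = 3) : False := by
  have hB3 : f (σB 3) ∈ MulAction.orbit ℤˣ (f 3) := hB.mem_orbit_of_sum_eq_zero htwo hsum hσB
  have hσB3 : σB 3 = 0 := by
    have hne3 : σB 3 ≠ 3 := fun h => absurd (σB.injective (h.trans hσB.symm)) (by decide)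
    rcases eq_three_of_mem_orbit htwo hinj (hB.mem_orbit hB3) (σB.injective.ne hne3) with h | h
    · exact σB.injective (h.trans hσB.symm)
    · exact absurd h hne3
  rw [hσB3] at hB3
  have hA3 := hA.mem_orbit hB3
  rw [hσA] at hA3
  have hσA3 : σA 3 = 3 :=
    (eq_three_of_mem_orbit htwo hinj hA3 (hσA ▸ σA.injective.ne (by decide))).resolve_left
      (by decide)
  rw [hσA3] at hA3
  have h01 : f 0 ∈ MulAction.orbit ℤˣ (f 1) := MulAction.orbit_eq_iff.2 hA3 ▸ hB3
  exact absurd (eq_three_of_mem_orbit htwo hinj h01 (by decide)) (by decide)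

end Fin4

section BCC

abbrev bccLift (a t x y z : ℤ) : Matrix (Fin 4) (Fin 4) ℤ :=
  !![2 * a, 0, a, x; 0, 2 * a, a, y; 0, 0, a, z; 0, 0, 0, t]

variable {a t x y z : ℤ}

theorem bccLift_mulVec (u : Fin 4 → ℤ) : bccLift a t x y z *ᵥ u =
    ![2 * a * u 0 + a * u 2 + x * u 3, 2 * a * u 1 + a * u 2 + y * u 3, a * u 2 + z * u 3,
      t * u 3] := by
  ext k; fin_cases k <;> simp [mulVec, dotProduct, Fin.sum_univ_four]

theorem smul_sum_mem_colSpan_bccLift :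
    a • (stdBasis 0 + stdBasis 1 + stdBasis 2) ∈ colSpan (bccLift a t x y z) :=
  ⟨![0, 0, 1, 0], by ext k; fin_cases k <;> simp [_root_.stdBasis]⟩

theorem two_mul_smul_stdBasis_mem_colSpan_bccLift {j : Fin 4} (hj : j ≠ 3) :
    (2 * a) • stdBasis j ∈ colSpan (bccLift a t x y z) := by
  fin_cases j
  · exact ⟨![1, 0, 0, 0], by ext k; fin_cases k <;> simp [_root_.stdBasis]⟩
  · exact ⟨![0, 1, 0, 0], by ext k; fin_cases k <;> simp [_root_.stdBasis]⟩
  · exact ⟨![-1, -1, 2, 0], by ext k; fin_cases k <;> simp [_root_.stdBasis]⟩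
  · exact absurd rfl hj

theorem modEq_of_smul_mem_colSpan_bccLift (ha : a ≠ 0) (ht : t ≠ 0) {w : Fin 4 → ℤ}
    (hw : a • w ∈ colSpan (bccLift a t x y z)) (hw₃ : w 3 = 0) :
    w 0 ≡ w 2 [ZMOD 2] ∧ w 1 ≡ w 2 [ZMOD 2] := by
  obtain ⟨u, hu⟩ := hw
  have hu' := fun k => congrFun hu k
  simp only [mulVecLin_apply, bccLift_mulVec] at hu'
  have h₃ : u 3 = 0 := by simpa [hw₃, ht] using hu' 3
  have e₀ : 2 * a * u 0 + a * u 2 = a * w 0 := by simpa [h₃] using hu' 0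
  have e₁ : 2 * a * u 1 + a * u 2 = a * w 1 := by simpa [h₃] using hu' 1
  have h₀ : 2 * u 0 + u 2 = w 0 := mul_left_cancel₀ ha (by linear_combination e₀)
  have h₁ : 2 * u 1 + u 2 = w 1 := mul_left_cancel₀ ha (by linear_combination e₁)
  have h₂ : u 2 = w 2 := by simpa [h₃, ha] using hu' 2
  constructor <;> (simp only [Int.ModEq]; omega)

theorem two_nsmul_smul_mk_bccLift {j : Fin 4} (hj : j ≠ 3) :
    2 • a • (Submodule.Quotient.mk (stdBasis j) : LatticeVertex (bccLift a t x y z)) = 0 := by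
  rw [← Submodule.Quotient.mk_smul, ← Submodule.Quotient.mk_smul, Submodule.Quotient.mk_eq_zero,
    two_nsmul, ← add_smul, ← two_mul]
  exact two_mul_smul_stdBasis_mem_colSpan_bccLift hj

theorem sum_smul_mk_bccLift :
    a • (Submodule.Quotient.mk (stdBasis 0) : LatticeVertex (bccLift a t x y z)) +
      a • Submodule.Quotient.mk (stdBasis 1) + a • Submodule.Quotient.mk (stdBasis 2) = 0 := by
  rw [← smul_add, ← smul_add, ← Submodule.Quotient.mk_add, ← Submodule.Quotient.mk_add,
    ← Submodule.Quotient.mk_smul, Submodule.Quotient.mk_eq_zero]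
  exact smul_sum_mem_colSpan_bccLift

theorem injOn_smul_mk_bccLift (ha : a ≠ 0) (ht : t ≠ 0) :
    Set.InjOn
      (fun j => a • (Submodule.Quotient.mk (stdBasis j) : LatticeVertex (bccLift a t x y z)))
      {3}ᶜ := by
  intro i hi j hj hij
  simp only [← Submodule.Quotient.mk_smul, Submodule.Quotient.eq, ← smul_sub] at hij
  have h3 : (stdBasis i - stdBasis j : Fin 4 → ℤ) 3 = 0 := by
    simp_all [_root_.stdBasis, eq_comm]
  have := modEq_of_smul_mem_colSpan_bccLift ha ht hij h3
  fin_cases i <;> fin_cases j <;> simp_all [_root_.stdBasis, Int.ModEq]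

end BCC

/-- no lift of `BCC(a)` is linearly symmetric. -/
theorem lift_of_BCC_not_linearlySymmetric (a t : ℕ) (ha : 0 < a) (ht : 0 < t)
    (x y z : ℤ) :
    ¬ IsLinearlySymmetric
      !![(2 * a : ℤ), 0, a, x; 0, 2 * a, a, y; 0, 0, a, z; 0, 0, 0, (t : ℤ)] := by
  intro hsym
  obtain ⟨φA, σA, hA, hσA⟩ := hsym.exists_permutesUpToSign (a : ℤ) 1
  obtain ⟨φB, σB, hB, hσB⟩ := hsym.exists_permutesUpToSign (a : ℤ) 3
  exact false_of_permutesUpToSign (fun j hj => two_nsmul_smul_mk_bccLift hj) sum_smul_mk_bccLift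
    (injOn_smul_mk_bccLift (by positivity) (by positivity)) hA hσA hB hσB
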